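/- The amalgamation axiom holds for 𝒫: let (a,S_a) ∈ 𝒜𝒫 and (B,S_B) ∈ 𝒫 with [(a,S_a);(B,S_B)] ≠ ∅ and n = depth_{(B,S_B)}(a,S_a). Then (i) for every (A,S_A) ∈ [n;(B,S_B)] one has [(a,S_a);(A,S_A)] ≠ ∅; and (ii) for every (A,S_A) ∈ [(a,S_a);(B,S_B)] there exists (A',S_{A'}) ∈ [n;(B,S_B)] such that ∅ ≠ [(a,S_a);(A',S_{A'})] ⊆ [(a,S_a);(A,S_A)]. -/

import Mathlib

open Set

/-- A candidate pair: a vertex set `x ⊆ ℕ` together with a collection of finite subsets of ℕ. -/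
abbrev PPair : Type := Set ℕ × Set (Finset ℕ)

/-- `S` is hereditary: subsets of members are members. -/
def Hereditary (S : Set (Finset ℕ)) : Prop := ∀ u v : Finset ℕ, u ⊆ v → v ∈ S → u ∈ S

/-- `(x, S)` is a polyhedron pair: members of `S` are finite subsets of `x`,
`S` is hereditary, and `⋃ S = x`. -/
def IsPolyPair (P : PPair) : Prop :=
  (∀ u ∈ P.2, (u : Set ℕ) ⊆ P.1) ∧ Hereditary P.2 ∧ (∀ n ∈ P.1, ∃ u ∈ P.2, n ∈ u)

/-- Members of `𝒫`: polyhedron pairs with infinite vertex set. -/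
def InfPoly (P : PPair) : Prop := IsPolyPair P ∧ P.1.Infinite

/-- Members of `𝒜𝒫`: polyhedron pairs with finite vertex set. -/
def FinPoly (P : PPair) : Prop := IsPolyPair P ∧ P.1.Finite

/-- `x ↾ n` : the set of the `n` smallest elements of `x`. -/
noncomputable def vrestrict (x : Set ℕ) (n : ℕ) : Finset ℕ :=
  (Finset.range n).image (Nat.nth (· ∈ x))

/-- `S ↾ a = {u ∩ a : u ∈ S}`. -/
def frestrict (S : Set (Finset ℕ)) (a : Finset ℕ) : Set (Finset ℕ) :=
  (fun u => u ∩ a) '' S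

/-- The `n`-th approximation `r_n(x,S) = (x ↾ n, S ↾ (x ↾ n))`. -/
noncomputable def approx (n : ℕ) (P : PPair) : PPair :=
  (↑(vrestrict P.1 n), frestrict P.2 (vrestrict P.1 n))

/-- `(y,T) ≤ (x,S)` iff `y ⊆ x` and `T ⊆ S`. -/
def ple (P Q : PPair) : Prop := P.1 ⊆ Q.1 ∧ P.2 ⊆ Q.2

/-- `(a,S_a) ≤_fin (b,S_b)` iff `(a,S_a) ≤ (b,S_b)` and `max a = max b`. -/
def plefin (P Q : PPair) : Prop := ple P Q ∧ sSup P.1 = sSup Q.1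

/-- The Ellentuck neighborhood `[(a,S_a); (A,S_A)]` inside `𝒫`. -/
def nbhdRaw (a A : PPair) : Set PPair :=
  {B | InfPoly B ∧ ple B A ∧ ∃ n, approx n B = a}

/-- `depth_{(A,S_A)}(a,S_a)`. -/
noncomputable def pdepth (A a : PPair) : ℕ := sInf {n | plefin a (approx n A)}

/-! ### Auxiliary lemmas -/

lemma setOf_mem_inf {x : Set ℕ} (hx : x.Infinite) : (setOf (· ∈ x)).Infinite := by
  exact hx

lemma mem_vrestrict {x : Set ℕ} {n y : ℕ} :
    y ∈ vrestrict x n ↔ ∃ k < n, Nat.nth (· ∈ x) k = y := by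
  simp [vrestrict]

lemma vrestrict_subset {x : Set ℕ} (hx : x.Infinite) (n : ℕ) :
    ↑(vrestrict x n) ⊆ x := by
  intro y hy
  rw [Finset.mem_coe, mem_vrestrict] at hy
  obtain ⟨k, -, rfl⟩ := hy
  exact Nat.nth_mem_of_infinite (setOf_mem_inf hx) k

lemma card_vrestrict {x : Set ℕ} (hx : x.Infinite) (n : ℕ) :
    (vrestrict x n).card = n := by
  rw [vrestrict, Finset.card_image_of_injective _ (Nat.nth_injective (setOf_mem_inf hx)),
    Finset.card_range]

lemma vrestrict_zero (x : Set ℕ) : vrestrict x 0 = ∅ := by simp [vrestrict]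

lemma lt_of_mem_vrestrict {x : Set ℕ} (hx : x.Infinite) {z n : ℕ}
    (hz : z ∈ x) (hzn : z ∉ vrestrict x n) : ∀ y ∈ vrestrict x n, y < z := by
  classical
  intro y hy
  rw [mem_vrestrict] at hy
  obtain ⟨k, hk, rfl⟩ := hy
  have hz' : Nat.nth (· ∈ x) (Nat.count (· ∈ x) z) = z := Nat.nth_count hz
  have hnk : n ≤ Nat.count (· ∈ x) z := by
    by_contra h
    exact hzn (mem_vrestrict.2 ⟨_, Nat.lt_of_not_le h, hz'⟩)
  calc Nat.nth (· ∈ x) k < Nat.nth (· ∈ x) (Nat.count (· ∈ x) z) :=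
        (Nat.nth_lt_nth (setOf_mem_inf hx)).2 (hk.trans_le hnk)
    _ = z := hz'

lemma vrestrict_union (s : Finset ℕ) (T : Set ℕ) (hT : ∀ t ∈ T, ∀ y ∈ s, y < t)
    (hinf : ((↑s : Set ℕ) ∪ T).Infinite) :
    vrestrict ((↑s : Set ℕ) ∪ T) s.card = s := by
  classical
  set x : Set ℕ := (↑s : Set ℕ) ∪ T with hxdef
  have hsub : vrestrict x s.card ⊆ s := by
    intro y hy
    rw [mem_vrestrict] at hy
    obtain ⟨k, hk, rfl⟩ := hy
    by_contra hns
    have hmem : Nat.nth (· ∈ x) k ∈ x := Nat.nth_mem_of_infinite (setOf_mem_inf hinf) k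
    have hmT : Nat.nth (· ∈ x) k ∈ T := by
      rcases hmem with h | h
      · exact absurd (Finset.mem_coe.1 h) hns
      · exact h
    have hcount : s.card ≤ Nat.count (· ∈ x) (Nat.nth (· ∈ x) k) := by
      have : s ⊆ (Finset.range (Nat.nth (· ∈ x) k)).filter (· ∈ x) := by
        intro y hy
        refine Finset.mem_filter.2 ⟨Finset.mem_range.2 (hT _ hmT y hy), ?_⟩
        exact Or.inl (Finset.mem_coe.2 hy)
      calc s.card ≤ _ := Finset.card_le_card this
        _ = Nat.count (· ∈ x) (Nat.nth (· ∈ x) k) := (Nat.count_eq_card_filter_range _ _).symm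
    rw [Nat.count_nth_of_infinite (setOf_mem_inf hinf)] at hcount
    exact absurd hk (Nat.not_lt.2 hcount)
  exact Finset.eq_of_subset_of_card_le hsub (le_of_eq (card_vrestrict hinf s.card).symm)

lemma tail_infinite {x : Set ℕ} (hx : x.Infinite) (s : Finset ℕ) :
    {z ∈ x | ∀ y ∈ s, y < z}.Infinite := by
  classical
  have hfin : ({z : ℕ | z ≤ s.sup id}).Finite := Set.finite_Iic _
  refine ((hx.diff hfin).mono ?_)
  rintro z ⟨hzx, hzn⟩
  refine ⟨hzx, fun y hy => ?_⟩
  have : ¬ z ≤ s.sup id := hzn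
  have hyz : y ≤ s.sup id := Finset.le_sup (f := id) hy
  omega

/-- The amalgam of a finite approximation `(↑s, Sa)` with the tail of `A` above `s`. -/
def amalgam (A : PPair) (s : Finset ℕ) (Sa : Set (Finset ℕ)) : PPair :=
  ((↑s : Set ℕ) ∪ {z ∈ A.1 | ∀ y ∈ s, y < z},
   {u | u ∈ A.2 ∧ (↑u : Set ℕ) ⊆ (↑s : Set ℕ) ∪ {z ∈ A.1 | ∀ y ∈ s, y < z} ∧ u ∩ s ∈ Sa})

lemma amalgam_spec (A : PPair) (hA : InfPoly A) (a : PPair) (s : Finset ℕ)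
    (hs : a.1 = ↑s) (hpa : IsPolyPair a) (hem : ∅ ∈ a.2)
    (h2 : a.2 ⊆ A.2) (h1 : a.1 ⊆ A.1) :
    amalgam A s a.2 ∈ nbhdRaw a A := by
  set T : Set ℕ := {z ∈ A.1 | ∀ y ∈ s, y < z} with hT
  have hTA : T ⊆ A.1 := fun z hz => hz.1
  have hsA : (↑s : Set ℕ) ⊆ A.1 := hs ▸ h1
  have hCinf : ((↑s : Set ℕ) ∪ T).Infinite :=
    ((tail_infinite hA.2 s).mono (Set.subset_union_right))
  have hTnot : ∀ z ∈ T, z ∉ s := by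
    intro z hz hzs
    exact lt_irrefl z (hz.2 z hzs)
  have hvr : vrestrict ((↑s : Set ℕ) ∪ T) s.card = s :=
    vrestrict_union s T (fun t ht y hy => ht.2 y hy) hCinf
  refine ⟨⟨⟨?_, ?_, ?_⟩, hCinf⟩, ⟨?_, ?_⟩, s.card, ?_⟩
  · rintro u ⟨-, hu, -⟩
    exact hu
  · rintro u v huv ⟨hvA, hvsub, hvs⟩
    exact ⟨hA.1.2.1 u v huv hvA, (Finset.coe_subset.2 huv).trans hvsub,
      hpa.2.1 _ _ (Finset.inter_subset_inter huv (Finset.Subset.refl s)) hvs⟩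
  · rintro x (hx | hx)
    · obtain ⟨u, hu, hxu⟩ := hpa.2.2 x (hs ▸ hx)
      have husub : (↑u : Set ℕ) ⊆ (↑s : Set ℕ) := hs ▸ hpa.1 u hu
      have hus : u ⊆ s := Finset.coe_subset.1 husub
      exact ⟨u, ⟨h2 hu, husub.trans Set.subset_union_left,
        by rwa [Finset.inter_eq_left.2 hus]⟩, hxu⟩
    · obtain ⟨w, hw, hxw⟩ := hA.1.2.2 x (hTA hx)
      refine ⟨{x}, ⟨hA.1.2.1 {x} w (Finset.singleton_subset_iff.2 hxw) hw, ?_, ?_⟩,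
        Finset.mem_singleton_self x⟩
      · intro z hz
        rw [Finset.coe_singleton, Set.mem_singleton_iff] at hz
        exact hz ▸ Or.inr hx
      · have : ({x} : Finset ℕ) ∩ s = ∅ := by
          rw [Finset.singleton_inter_of_notMem (hTnot x hx)]
        rw [this]; exact hem
  · rintro x (hx | hx)
    · exact hsA hx
    · exact hTA hx
  · rintro u ⟨hu, -, -⟩
    exact hu
  · rw [Prod.ext_iff]
    constructor
    · show ↑(vrestrict ((↑s : Set ℕ) ∪ T) s.card) = a.1
      rw [hvr, hs]
    · show frestrict (amalgam A s a.2).2 (vrestrict ((↑s : Set ℕ) ∪ T) s.card) = a.2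
      rw [hvr]
      ext u
      constructor
      · rintro ⟨w, ⟨-, -, hws⟩, rfl⟩
        exact hws
      · intro hu
        have husub : (↑u : Set ℕ) ⊆ (↑s : Set ℕ) := hs ▸ hpa.1 u hu
        have hus : u ⊆ s := Finset.coe_subset.1 husub
        exact ⟨u, ⟨h2 hu, husub.trans Set.subset_union_left,
          by rwa [Finset.inter_eq_left.2 hus]⟩, Finset.inter_eq_left.2 hus⟩

/-- Axiom A.3 (amalgamation) for `𝒫`: with `n = depth_{(B,S_B)}(a,S_a)`,
(i) `[(a,S_a);(A,S_A)] ≠ ∅` for every `(A,S_A) ∈ [n;(B,S_B)]`, and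
(ii) for every `(A,S_A) ∈ [(a,S_a);(B,S_B)]` there is `(A',S_{A'}) ∈ [n;(B,S_B)]` with
`∅ ≠ [(a,S_a);(A',S_{A'})] ⊆ [(a,S_a);(A,S_A)]`. -/
theorem polyPair_axiom_A3 (a B : PPair) (ha : FinPoly a) (hB : InfPoly B)
    (hne : (nbhdRaw a B).Nonempty) :
    (∀ A ∈ nbhdRaw (approx (pdepth B a) B) B, (nbhdRaw a A).Nonempty) ∧
    (∀ A ∈ nbhdRaw a B, ∃ A' ∈ nbhdRaw (approx (pdepth B a) B) B,
      (nbhdRaw a A').Nonempty ∧ nbhdRaw a A' ⊆ nbhdRaw a A) := by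
  classical
  obtain ⟨C₀, hC₀poly, hC₀le, n₀, hC₀r⟩ := hne
  have hC₀inf := hC₀poly.2
  have hBpoly := hB.1
  have hBinf := hB.2
  have haset1 : a.1 = ↑(vrestrict C₀.1 n₀) := by rw [← hC₀r]; rfl
  set aset : Finset ℕ := vrestrict C₀.1 n₀ with haset_def
  have haset2 : a.2 = frestrict C₀.2 aset := by rw [← hC₀r]; rfl
  have asubB1 : a.1 ⊆ B.1 := by
    rw [haset1]
    exact (vrestrict_subset hC₀inf n₀).trans hC₀le.1
  have hempty : ∅ ∈ a.2 := by
    obtain ⟨x, hx⟩ := hC₀inf.nonempty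
    obtain ⟨w, hw, hxw⟩ := hC₀poly.1.2.2 x hx
    have hmem : w ∩ aset ∈ a.2 := by rw [haset2]; exact ⟨w, hw, rfl⟩
    exact ha.1.2.1 ∅ (w ∩ aset) (Finset.empty_subset _) hmem
  -- the set of depths is nonempty
  have h0mem : aset = ∅ → plefin a (approx 0 B) := by
    intro h0
    have hv0 : vrestrict B.1 0 = ∅ := vrestrict_zero B.1
    refine ⟨⟨?_, ?_⟩, ?_⟩
    · show a.1 ⊆ ↑(vrestrict B.1 0)
      rw [haset1, h0, hv0]
    · show a.2 ⊆ frestrict B.2 (vrestrict B.1 0)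
      intro u hu
      rw [haset2] at hu
      obtain ⟨w, hw, rfl⟩ := hu
      exact ⟨w, hC₀le.2 hw, by rw [hv0, h0]⟩
    · show sSup a.1 = sSup ↑(vrestrict B.1 0)
      rw [haset1, h0, hv0]
  have Dne : {n | plefin a (approx n B)}.Nonempty := by
    rcases aset.eq_empty_or_nonempty with h0 | hne'
    · exact ⟨0, h0mem h0⟩
    · have hane : a.1.Nonempty := by
        rw [haset1]; exact_mod_cast hne'
      have hMa : sSup a.1 ∈ a.1 := hane.csSup_mem ha.2
      have hMB : sSup a.1 ∈ B.1 := asubB1 hMa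
      set M := sSup a.1 with hM
      set m := Nat.count (· ∈ B.1) M + 1 with hm
      have hiff : ∀ y, y ∈ vrestrict B.1 m ↔ y ∈ B.1 ∧ y ≤ M := by
        intro y
        constructor
        · intro hy
          rw [mem_vrestrict] at hy
          obtain ⟨k, hk, rfl⟩ := hy
          refine ⟨Nat.nth_mem_of_infinite (setOf_mem_inf hBinf) k, ?_⟩
          have hmono : Nat.nth (· ∈ B.1) k ≤ Nat.nth (· ∈ B.1) (Nat.count (· ∈ B.1) M) :=
            Nat.nth_monotone (setOf_mem_inf hBinf) (Nat.lt_succ_iff.1 hk)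
          rwa [Nat.nth_count hMB] at hmono
        · rintro ⟨hyB, hyM⟩
          refine mem_vrestrict.2 ⟨Nat.count (· ∈ B.1) y, ?_, Nat.nth_count hyB⟩
          exact Nat.lt_succ_of_le (Nat.count_monotone _ hyM)
      refine ⟨m, ⟨⟨?_, ?_⟩, ?_⟩⟩
      · show a.1 ⊆ ↑(vrestrict B.1 m)
        intro y hy
        exact Finset.mem_coe.2 ((hiff y).2 ⟨asubB1 hy, le_csSup ha.2.bddAbove hy⟩)
      · show a.2 ⊆ frestrict B.2 (vrestrict B.1 m)
        intro u hu
        rw [haset2] at hu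
        obtain ⟨w, hw, rfl⟩ := hu
        have hwB : w ∩ aset ∈ B.2 :=
          hBpoly.2.1 _ w Finset.inter_subset_left (hC₀le.2 hw)
        have hsubvr : w ∩ aset ⊆ vrestrict B.1 m := by
          intro z hz
          have hza : z ∈ a.1 := by
            rw [haset1]
            exact Finset.mem_coe.2 (Finset.mem_of_mem_inter_right hz)
          exact (hiff z).2 ⟨asubB1 hza, le_csSup ha.2.bddAbove hza⟩
        exact ⟨w ∩ aset, hwB, Finset.inter_eq_left.2 hsubvr⟩
      · show sSup a.1 = sSup ↑(vrestrict B.1 m)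
        have h1 : M ∈ vrestrict B.1 m := (hiff M).2 ⟨hMB, le_rfl⟩
        have h2 : sSup (↑(vrestrict B.1 m) : Set ℕ) = M :=
          le_antisymm (csSup_le ⟨M, Finset.mem_coe.2 h1⟩
              (fun y hy => ((hiff y).1 (Finset.mem_coe.1 hy)).2))
            (le_csSup (Set.Finite.bddAbove (Finset.finite_toSet _)) (Finset.mem_coe.2 h1))
        rw [h2]
  have hd : plefin a (approx (pdepth B a) B) := Nat.sInf_mem Dne
  set bset : Finset ℕ := vrestrict B.1 (pdepth B a) with hbset_def
  have hab1 : a.1 ⊆ (↑bset : Set ℕ) := hd.1.1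
  have hab2 : a.2 ⊆ frestrict B.2 bset := hd.1.2
  have habs : sSup a.1 = sSup (↑bset : Set ℕ) := hd.2
  have hd0 : aset = ∅ → bset = ∅ := by
    intro h0
    have h0' : pdepth B a = 0 := Nat.le_zero.1 (Nat.sInf_le (h0mem h0))
    rw [hbset_def, h0', vrestrict_zero]
  have keyLT : ∀ x ∈ bset, (∀ y ∈ aset, y < x) → False := by
    intro x hx hlt
    rcases aset.eq_empty_or_nonempty with h0 | hne'
    · rw [hd0 h0] at hx
      exact absurd hx (Finset.notMem_empty x)
    · have hane : a.1.Nonempty := by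
        rw [haset1]; exact_mod_cast hne'
      have hMa : sSup a.1 ∈ a.1 := hane.csSup_mem ha.2
      have hMaset : sSup a.1 ∈ aset := by
        have hsub : a.1 ⊆ (↑aset : Set ℕ) := le_of_eq haset1
        exact Finset.mem_coe.1 (hsub hMa)
      have h1 : sSup a.1 < x := hlt _ hMaset
      have h2 : x ≤ sSup (↑bset : Set ℕ) :=
        le_csSup (Set.Finite.bddAbove (Finset.finite_toSet _)) (Finset.mem_coe.2 hx)
      rw [← habs] at h2
      omega
  have approx_eqs : ∀ (C : PPair) (n : ℕ), approx n C = a →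
      vrestrict C.1 n = aset ∧ frestrict C.2 aset = a.2 := by
    intro C n hr
    have h1 : (↑(vrestrict C.1 n) : Set ℕ) = ↑aset := by
      have := congrArg Prod.fst hr
      simp only [approx] at this
      rw [this, haset1]
    have hv : vrestrict C.1 n = aset := Finset.coe_injective h1
    refine ⟨hv, ?_⟩
    have h2 := congrArg Prod.snd hr
    simp only [approx] at h2
    rwa [hv] at h2
  have traceMem : ∀ (C : PPair) (n : ℕ), C.1.Infinite → approx n C = a →
      ∀ x ∈ C.1, x ∈ bset → x ∈ aset := by
    intro C n hCinf hr x hx hxb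
    have hvr := (approx_eqs C n hr).1
    by_contra hxa
    refine keyLT x hxb ?_
    rw [← hvr]
    exact lt_of_mem_vrestrict hCinf hx (by rw [hvr]; exact hxa)
  constructor
  · -- part (i)
    rintro A ⟨hApoly, hAle, m, hAr⟩
    have hvrA : vrestrict A.1 m = bset := by
      apply Finset.coe_injective
      have := congrArg Prod.fst hAr
      simpa only [approx] using this
    have hfr : frestrict A.2 bset = frestrict B.2 bset := by
      have := congrArg Prod.snd hAr
      simp only [approx] at this
      rwa [hvrA] at this
    have h2 : a.2 ⊆ A.2 := by
      intro u hu
      have hmem := hab2 hu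
      rw [← hfr] at hmem
      obtain ⟨w, hw, rfl⟩ := hmem
      exact hApoly.1.2.1 _ w Finset.inter_subset_left hw
    have h1 : a.1 ⊆ A.1 := by
      intro y hy
      have hmem : y ∈ (↑bset : Set ℕ) := hab1 hy
      rw [← hvrA] at hmem
      exact vrestrict_subset hApoly.2 m hmem
    exact ⟨amalgam A aset a.2, amalgam_spec A hApoly a aset haset1 ha.1 hempty h2 h1⟩
  · -- part (ii)
    rintro A ⟨hApoly, hAle, k, hAr⟩
    have hAinf := hApoly.2
    obtain ⟨hvrA, haA2⟩ := approx_eqs A k hAr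
    have aSubA2 : a.2 ⊆ A.2 := by
      intro u hu
      rw [← haA2] at hu
      obtain ⟨w, hw, rfl⟩ := hu
      exact hApoly.1.2.1 _ w Finset.inter_subset_left hw
    have asubA1 : a.1 ⊆ A.1 := by
      rw [haset1, ← hvrA]
      exact vrestrict_subset hAinf k
    have hasetbset : aset ⊆ bset := by
      rw [← Finset.coe_subset, ← haset1]
      exact hab1
    set T : Set ℕ := {z ∈ A.1 | ∀ y ∈ bset, y < z} with hTdef
    set S' : Set (Finset ℕ) :=
      frestrict B.2 bset ∪
        {u | u ∈ A.2 ∧ (↑u : Set ℕ) ⊆ (↑bset : Set ℕ) ∪ T ∧ u ∩ bset ⊆ aset} with hS'def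
    set A' : PPair := ((↑bset : Set ℕ) ∪ T, S') with hA'def
    have hTA : T ⊆ A.1 := fun z hz => hz.1
    have hA'inf1 : ((↑bset : Set ℕ) ∪ T).Infinite :=
      (tail_infinite hAinf bset).mono Set.subset_union_right
    have hTnotb : ∀ z ∈ T, z ∉ bset := fun z hz hzb => lt_irrefl z (hz.2 z hzb)
    have hbcard : bset.card = pdepth B a := card_vrestrict hBinf _
    have hvrA' : vrestrict ((↑bset : Set ℕ) ∪ T) (pdepth B a) = bset := by
      have h := vrestrict_union bset T (fun t ht y hy => ht.2 y hy) hA'inf1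
      rwa [hbcard] at h
    -- A' is a polyhedron pair
    have hA'poly : InfPoly A' := by
      refine ⟨⟨?_, ?_, ?_⟩, hA'inf1⟩
      · rintro u (⟨w, hw, rfl⟩ | ⟨-, hsub, -⟩)
        · intro z hz
          exact Or.inl (Finset.mem_coe.2 (Finset.mem_of_mem_inter_right (Finset.mem_coe.1 hz)))
        · exact hsub
      · rintro u v huv (⟨w, hw, rfl⟩ | ⟨hvA, hvsub, hvb⟩)
        · refine Or.inl ⟨u, hBpoly.2.1 u w (huv.trans Finset.inter_subset_left) hw, ?_⟩
          exact Finset.inter_eq_left.2 (huv.trans Finset.inter_subset_right)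
        · exact Or.inr ⟨hApoly.1.2.1 u v huv hvA, (Finset.coe_subset.2 huv).trans hvsub,
            (Finset.inter_subset_inter huv (Finset.Subset.refl bset)).trans hvb⟩
      · rintro x (hx | hx)
        · have hxB : x ∈ B.1 := vrestrict_subset hBinf _ hx
          obtain ⟨w, hw, hxw⟩ := hBpoly.2.2 x hxB
          exact ⟨w ∩ bset, Or.inl ⟨w, hw, rfl⟩,
            Finset.mem_inter.2 ⟨hxw, Finset.mem_coe.1 hx⟩⟩
        · obtain ⟨w, hw, hxw⟩ := hApoly.1.2.2 x (hTA hx)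
          refine ⟨{x}, Or.inr ⟨hApoly.1.2.1 {x} w (Finset.singleton_subset_iff.2 hxw) hw,
            ?_, ?_⟩, Finset.mem_singleton_self x⟩
          · intro z hz
            rw [Finset.coe_singleton, Set.mem_singleton_iff] at hz
            exact hz ▸ Or.inr hx
          · rw [Finset.singleton_inter_of_notMem (hTnotb x hx)]
            exact Finset.empty_subset _
    have hA'leB : ple A' B := by
      constructor
      · rintro x (hx | hx)
        · exact vrestrict_subset hBinf _ hx
        · exact hAle.1 (hTA hx)
      · rintro u (⟨w, hw, rfl⟩ | ⟨huA, -, -⟩)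
        · exact hBpoly.2.1 _ w Finset.inter_subset_left hw
        · exact hAle.2 huA
    have hA'approx : approx (pdepth B a) A' = approx (pdepth B a) B := by
      rw [Prod.ext_iff]
      constructor
      · show (↑(vrestrict ((↑bset : Set ℕ) ∪ T) (pdepth B a)) : Set ℕ) =
            ↑(vrestrict B.1 (pdepth B a))
        rw [hvrA', hbset_def]
      · show frestrict S' (vrestrict ((↑bset : Set ℕ) ∪ T) (pdepth B a)) =
            frestrict B.2 (vrestrict B.1 (pdepth B a))
        rw [hvrA', ← hbset_def]
        ext u
        constructor
        · rintro ⟨w, (⟨v, hv, rfl⟩ | ⟨hwA, -, hwb⟩), rfl⟩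
          · exact ⟨v, hv, by simp [Finset.inter_assoc]⟩
          · have heq : w ∩ bset = w ∩ aset :=
              Finset.Subset.antisymm
                (Finset.subset_inter Finset.inter_subset_left hwb)
                (Finset.inter_subset_inter (Finset.Subset.refl w) hasetbset)
            have hmem : w ∩ aset ∈ a.2 := by
              rw [← haA2]
              exact ⟨w, hwA, rfl⟩
            show w ∩ bset ∈ frestrict B.2 bset
            rw [heq]
            exact hab2 hmem
        · rintro ⟨w, hw, rfl⟩
          exact ⟨w ∩ bset, Or.inl ⟨w, hw, rfl⟩,
            by simp [Finset.inter_assoc]⟩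
    have hC := amalgam_spec A hApoly a aset haset1 ha.1 hempty aSubA2 asubA1
    have hsub1 : (amalgam A aset a.2).1 ⊆ A'.1 := by
      rintro x (hx | hx)
      · exact Or.inl (Finset.mem_coe.2 (hasetbset (Finset.mem_coe.1 hx)))
      · by_cases hxb : x ∈ bset
        · exact Or.inl (Finset.mem_coe.2 hxb)
        · refine Or.inr ⟨hx.1, fun y hy => ?_⟩
          have hxB : x ∈ B.1 := hAle.1 hx.1
          exact lt_of_mem_vrestrict hBinf hxB (by rw [← hbset_def]; exact hxb) y
            (by rw [← hbset_def]; exact hy)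
    have hsub2 : (amalgam A aset a.2).2 ⊆ A'.2 := by
      rintro u ⟨huA, husub, hua⟩
      refine Or.inr ⟨huA, husub.trans hsub1, ?_⟩
      intro z hz
      have hz1 : z ∈ u := Finset.mem_of_mem_inter_left hz
      have hz2 : z ∈ bset := Finset.mem_of_mem_inter_right hz
      rcases husub (Finset.mem_coe.2 hz1) with hz3 | hz3
      · exact Finset.mem_coe.1 hz3
      · exact absurd hz3.2 (fun h => keyLT z hz2 h)
    refine ⟨A', ⟨hA'poly, hA'leB, pdepth B a, hA'approx⟩,
      ⟨amalgam A aset a.2, hC.1, ⟨hsub1, hsub2⟩, hC.2.2⟩, ?_⟩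
    -- nbhdRaw a A' ⊆ nbhdRaw a A
    rintro C' ⟨hC'poly, hC'le, n, hC'r⟩
    obtain ⟨hvrC', hfrC'⟩ := approx_eqs C' n hC'r
    refine ⟨hC'poly, ⟨?_, ?_⟩, n, hC'r⟩
    · intro x hx
      rcases hC'le.1 hx with hxb | hxT
      · have hxa : x ∈ aset :=
          traceMem C' n hC'poly.2 hC'r x hx (Finset.mem_coe.1 hxb)
        exact asubA1 (by rw [haset1]; exact Finset.mem_coe.2 hxa)
      · exact hTA hxT
    · intro u hu
      rcases hC'le.2 hu with h | h
      · obtain ⟨w, hw, rfl⟩ := h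
        have hsubaset : w ∩ bset ⊆ aset := by
          intro z hz
          have hz2 : z ∈ bset := Finset.mem_of_mem_inter_right hz
          have hzC : z ∈ C'.1 := hC'poly.1.1 _ hu (Finset.mem_coe.2 hz)
          exact traceMem C' n hC'poly.2 hC'r z hzC hz2
        have hmem : w ∩ bset ∈ a.2 := by
          rw [← hfrC']
          exact ⟨w ∩ bset, hu, Finset.inter_eq_left.2 hsubaset⟩
        exact aSubA2 hmem
      · exact h.1
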